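/- arXiv:1507.06501 — 4 statements merged into one kernel-verified Lean document; each statement's English description precedes it below -/
import Mathlib

section
/- Let (J_t) be a smooth family of almost complex structures on a symplectic manifold (X,ω) compatible with ω, and set g_t := −ω J_t (i.e. g_t(ξ,η) = ω(ξ, J_t η) up to sign convention making g_t a Riemannian metric). Then ġ_t^* := g_t^{-1}ġ_t = −J_t J̇_t and the (1,0)-part (with respect to J_t) of g̈_t^* := g_t^{-1}g̈_t equals (ġ_t^*)². Consequently the (0,1)-part of g̈_t^* equals g̈_t^* − (ġ_t^*)² = d/dt(ġ_t^*). -/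
/-!
Model: pointwise linear algebra in the (normed) algebra `A` of endomorphisms of
the tangent space.  `ω` is the (constant, invertible) symplectic form, viewed as an
element of `A` (via a fixed identification of `T_X` with `T_X^*`), `J t` is the
family of `ω`-compatible complex structures (`(J t)² = -1`), and `g t := -(ω * J t)`.
`A^{1,0}` (resp. `A^{0,1}`) denotes the `J`-linear part `(1/2)(A - J A J)`
(resp. the `J`-anti-linear part `(1/2)(A + J A J)`).
-/

private lemma stmt7_aux {A : Type*} [Ring A] [Module ℝ A] (j j' j'' : A)
    (h1 : j * j = -1)
    (h2 : j' * j + j * j' = 0)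
    (h3 : j'' * j + j' * j' + (j' * j' + j * j'') = 0) :
    ((1 / 2 : ℝ) • (-(j * j'') - j * -(j * j'') * j) = (-(j * j')) ^ 2) ∧
    ((1 / 2 : ℝ) • (-(j * j'') + j * -(j * j'') * j) = -(j * j'') - (-(j * j')) ^ 2) ∧
    (-(j * j'') - (-(j * j')) ^ 2 = -(j' * j' + j * j'')) := by
  have e1 : j * j' = -(j' * j) := by
    have h2' : j * j' + j' * j = 0 := by rw [add_comm]; exact h2
    exact eq_neg_of_add_eq_zero_left h2'
  have key1 : j * j' * j = j' := by
    rw [e1, neg_mul, mul_assoc, h1, mul_neg_one, neg_neg]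
  have sqeq : (-(j * j')) ^ 2 = j' * j' := by
    rw [neg_sq, sq, ← mul_assoc, key1]
  have key2 : j * -(j * j'') * j = j'' * j := by
    rw [mul_neg, neg_mul, ← mul_assoc, h1, neg_one_mul, neg_mul, neg_neg]
  have D' : (j'' * j + j * j'') + (j' * j' + j' * j') = 0 := by rw [← h3]; abel
  have D : j'' * j + j * j'' = -(j' * j' + j' * j') := by
    rw [eq_neg_iff_add_eq_zero]; exact D'
  have hD2 : j'' * j = -(j' * j' + j' * j') - j * j'' := eq_sub_of_add_eq D
  refine ⟨?_, ?_, ?_⟩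
  · rw [key2, sqeq]
    have E : -(j * j'') - j'' * j = j' * j' + j' * j' := by
      have h : -(j * j'') - j'' * j = -(j'' * j + j * j'') := by abel
      rw [h, D, neg_neg]
    rw [E, ← two_smul ℝ, smul_smul]
    norm_num
  · rw [key2, sqeq]
    have F : -(j * j'') + j'' * j = (-(j * j'') - j' * j') + (-(j * j'') - j' * j') := by
      rw [hD2]; abel
    rw [F, ← two_smul ℝ, smul_smul]
    norm_num
  · rw [sqeq]; abel

/-- With `g t := -ω J t`: (i) `ġ* := g⁻¹ġ = -J J̇`;
(ii) `(g̈*)^{1,0} = (ġ*)²`; (iii) `(g̈*)^{0,1} = g̈* - (ġ*)² = d/dt (ġ*)`. -/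
theorem stmt7 {A : Type*} [NormedRing A] [NormedAlgebra ℝ A] [CompleteSpace A]
    (ω : A) (J : ℝ → A)
    (hω : IsUnit ω) (hJ : ∀ t, J t * J t = -1)
    (hJd : Differentiable ℝ J) (hJdd : Differentiable ℝ (deriv J)) :
    ∀ t,
      Ring.inverse (-(ω * J t)) * deriv (fun s => -(ω * J s)) t = -(J t * deriv J t) ∧
      (1 / 2 : ℝ) •
          (Ring.inverse (-(ω * J t)) * deriv (deriv (fun s => -(ω * J s))) t
            - J t * (Ring.inverse (-(ω * J t)) * deriv (deriv (fun s => -(ω * J s))) t) * J t)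
        = (Ring.inverse (-(ω * J t)) * deriv (fun s => -(ω * J s)) t) ^ 2 ∧
      (1 / 2 : ℝ) •
          (Ring.inverse (-(ω * J t)) * deriv (deriv (fun s => -(ω * J s))) t
            + J t * (Ring.inverse (-(ω * J t)) * deriv (deriv (fun s => -(ω * J s))) t) * J t)
        = Ring.inverse (-(ω * J t)) * deriv (deriv (fun s => -(ω * J s))) t
          - (Ring.inverse (-(ω * J t)) * deriv (fun s => -(ω * J s)) t) ^ 2 ∧
      Ring.inverse (-(ω * J t)) * deriv (deriv (fun s => -(ω * J s))) t
          - (Ring.inverse (-(ω * J t)) * deriv (fun s => -(ω * J s)) t) ^ 2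
        = deriv (fun s => Ring.inverse (-(ω * J s)) * deriv (fun r => -(ω * J r)) s) t := by
  have hJu : ∀ s, IsUnit (J s) := fun s =>
    ⟨⟨J s, -J s, by rw [mul_neg, hJ s, neg_neg], by rw [neg_mul, hJ s, neg_neg]⟩, rfl⟩
  have hωinv : Ring.inverse ω * ω = 1 := Ring.inverse_mul_cancel ω hω
  have hinv : ∀ s, Ring.inverse (-(ω * J s)) = J s * Ring.inverse ω := by
    intro s
    have hu : IsUnit (-(ω * J s)) := (hω.mul (hJu s)).neg
    have h1 : (J s * Ring.inverse ω) * (-(ω * J s)) = 1 := by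
      rw [mul_neg, mul_assoc, ← mul_assoc (Ring.inverse ω), hωinv, one_mul, hJ s, neg_neg]
    calc Ring.inverse (-(ω * J s))
        = ((J s * Ring.inverse ω) * (-(ω * J s))) * Ring.inverse (-(ω * J s)) := by
          rw [h1, one_mul]
      _ = (J s * Ring.inverse ω) * ((-(ω * J s)) * Ring.inverse (-(ω * J s))) := by
          rw [mul_assoc]
      _ = J s * Ring.inverse ω := by rw [Ring.mul_inverse_cancel _ hu, mul_one]
  have hsimp : ∀ s (a : A), Ring.inverse (-(ω * J s)) * -(ω * a) = -(J s * a) := by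
    intro s a
    rw [hinv s, mul_neg, mul_assoc, ← mul_assoc (Ring.inverse ω), hωinv, one_mul]
  have hg : deriv (fun s => -(ω * J s)) = fun s => -(ω * deriv J s) := by
    funext s
    exact (((hJd s).hasDerivAt.const_mul ω).neg).deriv
  have hgg : deriv (fun s => -(ω * deriv J s)) = fun s => -(ω * deriv (deriv J) s) := by
    funext s
    exact (((hJdd s).hasDerivAt.const_mul ω).neg).deriv
  have h2 : ∀ s, deriv J s * J s + J s * deriv J s = 0 := by
    intro s
    have h : HasDerivAt (fun r => J r * J r) (deriv J s * J s + J s * deriv J s) s :=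
      (hJd s).hasDerivAt.mul (hJd s).hasDerivAt
    have heq : (fun r => J r * J r) = fun _ : ℝ => (-1 : A) := funext hJ
    rw [heq] at h
    exact h.unique (hasDerivAt_const s (-1))
  have h3 : ∀ s, deriv (deriv J) s * J s + deriv J s * deriv J s
      + (deriv J s * deriv J s + J s * deriv (deriv J) s) = 0 := by
    intro s
    have h : HasDerivAt (fun r => deriv J r * J r + J r * deriv J r)
        (deriv (deriv J) s * J s + deriv J s * deriv J s
          + (deriv J s * deriv J s + J s * deriv (deriv J) s)) s :=
      ((hJdd s).hasDerivAt.mul (hJd s).hasDerivAt).add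
        ((hJd s).hasDerivAt.mul (hJdd s).hasDerivAt)
    have heq : (fun r => deriv J r * J r + J r * deriv J r) = fun _ : ℝ => (0 : A) :=
      funext h2
    rw [heq] at h
    exact h.unique (hasDerivAt_const s 0)
  intro t
  have hfun : (fun s => Ring.inverse (-(ω * J s)) * deriv (fun r => -(ω * J r)) s)
      = fun s => -(J s * deriv J s) := by
    funext s
    simp only [hg]
    exact hsimp s (deriv J s)
  have hd : deriv (fun s => -(J s * deriv J s)) t
      = -(deriv J t * deriv J t + J t * deriv (deriv J) t) :=
    (((hJd t).hasDerivAt.mul (hJdd t).hasDerivAt)).neg.deriv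
  rw [hfun, hd]
  simp only [hg, hgg]
  rw [hsimp t (deriv J t), hsimp t (deriv (deriv J) t)]
  obtain ⟨a1, a2, a3⟩ := stmt7_aux (J t) (deriv J t) (deriv (deriv J) t) (hJ t) (h2 t) (h3 t)
  exact ⟨rfl, a1, a2, a3⟩
end

section
/- Let (X,g,Ω) be a compact oriented Riemannian manifold with smooth positive volume form Ω, and let v be a smooth symmetric 2-tensor. With M_g(v,v)(ξ) := 2∇_g v(e_k, v^*_g e_k, ξ) + ∇_g v(ξ, v^*_g e_k, e_k) (summed over a g-orthonormal frame), one has M_g(v,v) = 2 v ∇_g^{*_Ω} v^*_g − 2 g ∇_g^{*_Ω}((v_g^*)²) + (1/2) d|v|²_g, where v^*_g := g^{-1}v. -/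
/-!
Model: a chart, i.e. Euclidean `E = ℝⁿ` with standard metric `g`
(covariant derivative = `fderiv`), volume form `Ω = e^{-f} dV_g`,
`f := log (dV_g/Ω)`.  A symmetric 2-tensor `v` is represented through the
`g`-symmetric endomorphism field `A := v^*_g = g⁻¹ v`, so that
`v(ξ,η) = ⟪A ξ, η⟫`, `∇_g v(ζ,ξ,η) = ⟪(∇_ζ A) ξ, η⟫`, `(v^*_g)² = A²`, and
`|v|²_g = ∑_k ⟪A e_k, A e_k⟫`.
-/

open scoped RealInnerProductSpace
noncomputable section

def nablaStarE {n : ℕ}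
    (A : EuclideanSpace ℝ (Fin n) → (EuclideanSpace ℝ (Fin n) →L[ℝ] EuclideanSpace ℝ (Fin n)))
    (x : EuclideanSpace ℝ (Fin n)) : EuclideanSpace ℝ (Fin n) :=
  -∑ i, fderiv ℝ A x (EuclideanSpace.basisFun (Fin n) ℝ i) (EuclideanSpace.basisFun (Fin n) ℝ i)

def nablaStarOmega {n : ℕ} (f : EuclideanSpace ℝ (Fin n) → ℝ)
    (A : EuclideanSpace ℝ (Fin n) → (EuclideanSpace ℝ (Fin n) →L[ℝ] EuclideanSpace ℝ (Fin n)))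
    (x : EuclideanSpace ℝ (Fin n)) : EuclideanSpace ℝ (Fin n) :=
  nablaStarE A x + A x (gradient f x)

/-- With `M_g(v,v)(ξ) := 2 ∇_g v(e_k, v^*_g e_k, ξ)
+ ∇_g v(ξ, v^*_g e_k, e_k)` (summed over a `g`-orthonormal frame),
`M_g(v,v) = 2 v ∇_g^{*_Ω} v^*_g - 2 g ∇_g^{*_Ω}((v^*_g)²) + (1/2) d |v|²_g`. -/
theorem stmt12 {n : ℕ} (f : EuclideanSpace ℝ (Fin n) → ℝ)
    (A : EuclideanSpace ℝ (Fin n) → (EuclideanSpace ℝ (Fin n) →L[ℝ] EuclideanSpace ℝ (Fin n)))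
    (hf : ContDiff ℝ (⊤ : ℕ∞) f) (hA : ContDiff ℝ (⊤ : ℕ∞) A)
    (hsym : ∀ x η ζ, ⟪A x η, ζ⟫ = ⟪η, A x ζ⟫) :
    ∀ x ξ,
      (2 : ℝ) * (∑ i, ⟪fderiv ℝ A x (EuclideanSpace.basisFun (Fin n) ℝ i)
                        (A x (EuclideanSpace.basisFun (Fin n) ℝ i)), ξ⟫)
        + (∑ i, ⟪fderiv ℝ A x ξ (A x (EuclideanSpace.basisFun (Fin n) ℝ i)),
                  EuclideanSpace.basisFun (Fin n) ℝ i⟫)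
      = (2 : ℝ) * ⟪A x (nablaStarOmega f A x), ξ⟫
        - (2 : ℝ) * ⟪nablaStarOmega f (fun y => (A y).comp (A y)) x, ξ⟫
        + (1 / 2 : ℝ) *
            fderiv ℝ (fun y => ∑ i, ⟪A y (EuclideanSpace.basisFun (Fin n) ℝ i),
                                     A y (EuclideanSpace.basisFun (Fin n) ℝ i)⟫) x ξ := by
  intro x ξ
  classical
  set e : Fin n → EuclideanSpace ℝ (Fin n) := fun i => EuclideanSpace.basisFun (Fin n) ℝ i with he
  have hAx : HasFDerivAt A (fderiv ℝ A x) x := (hA.differentiable (by simp) x).hasFDerivAt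
  set D : EuclideanSpace ℝ (Fin n) →L[ℝ] EuclideanSpace ℝ (Fin n) →L[ℝ] EuclideanSpace ℝ (Fin n) := fderiv ℝ A x with hD
  -- derivative of evaluation
  have hev : ∀ η : EuclideanSpace ℝ (Fin n), HasFDerivAt (fun y => A y η)
      ((ContinuousLinearMap.apply ℝ (EuclideanSpace ℝ (Fin n)) η).comp D) x :=
    fun η => ((ContinuousLinearMap.apply ℝ (EuclideanSpace ℝ (Fin n)) η).hasFDerivAt).comp x hAx
  -- symmetry of D ξ
  have hDsym : ∀ η ζ : EuclideanSpace ℝ (Fin n), ⟪D ξ η, ζ⟫ = ⟪η, D ξ ζ⟫ := by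
    intro η ζ
    have h1 : HasFDerivAt (fun y => ⟪ζ, A y η⟫)
        (((innerSL ℝ ζ).comp (ContinuousLinearMap.apply ℝ (EuclideanSpace ℝ (Fin n)) η)).comp D) x :=
      (((innerSL ℝ ζ).comp (ContinuousLinearMap.apply ℝ (EuclideanSpace ℝ (Fin n)) η)).hasFDerivAt).comp x hAx
    have h2 : HasFDerivAt (fun y => ⟪η, A y ζ⟫)
        (((innerSL ℝ η).comp (ContinuousLinearMap.apply ℝ (EuclideanSpace ℝ (Fin n)) ζ)).comp D) x :=
      (((innerSL ℝ η).comp (ContinuousLinearMap.apply ℝ (EuclideanSpace ℝ (Fin n)) ζ)).hasFDerivAt).comp x hAx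
    have hfe : (fun y => ⟪ζ, A y η⟫) = (fun y => ⟪η, A y ζ⟫) := by
      funext y
      rw [real_inner_comm, hsym]
    rw [hfe] at h1
    have := h1.unique h2
    have := congrArg (fun (L : EuclideanSpace ℝ (Fin n) →L[ℝ] ℝ) => L ξ) this
    simp only [ContinuousLinearMap.coe_comp', Function.comp_apply,
      ContinuousLinearMap.apply_apply, innerSL_apply_apply] at this
    rw [real_inner_comm] at this
    exact this
  -- derivative of the squared norm
  have hnorm : HasFDerivAt (fun y => ∑ i, ⟪A y (e i), A y (e i)⟫)
      (∑ i, (fderivInnerCLM ℝ (A x (e i), A x (e i))).comp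
        (((ContinuousLinearMap.apply ℝ (EuclideanSpace ℝ (Fin n)) (e i)).comp D).prod
          ((ContinuousLinearMap.apply ℝ (EuclideanSpace ℝ (Fin n)) (e i)).comp D))) x :=
    HasFDerivAt.fun_sum (fun i _ => (hev (e i)).inner ℝ (hev (e i)))
  have hnorm' : fderiv ℝ (fun y => ∑ i, ⟪A y (e i), A y (e i)⟫) x ξ
      = ∑ i, 2 * ⟪A x (e i), D ξ (e i)⟫ := by
    rw [hnorm.fderiv]
    simp only [ContinuousLinearMap.sum_apply, ContinuousLinearMap.coe_comp',
      Function.comp_apply, ContinuousLinearMap.prod_apply, fderivInnerCLM_apply,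
      ContinuousLinearMap.apply_apply]
    refine Finset.sum_congr rfl fun i _ => ?_
    rw [real_inner_comm (D ξ (e i)) (A x (e i))]
    ring
  -- derivative of A ∘ A
  have hB : HasFDerivAt (fun y => (A y).comp (A y))
      (((ContinuousLinearMap.compL ℝ (EuclideanSpace ℝ (Fin n)) (EuclideanSpace ℝ (Fin n)) (EuclideanSpace ℝ (Fin n)) (A x)).comp D)
        + (((ContinuousLinearMap.compL ℝ (EuclideanSpace ℝ (Fin n)) (EuclideanSpace ℝ (Fin n)) (EuclideanSpace ℝ (Fin n))).flip (A x)).comp D)) x :=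
    hAx.clm_comp hAx
  have hBf : ∀ ζ : EuclideanSpace ℝ (Fin n), fderiv ℝ (fun y => (A y).comp (A y)) x ζ
      = (A x).comp (D ζ) + (D ζ).comp (A x) := by
    intro ζ
    rw [hB.fderiv]
    rfl
  -- unfold the divergence terms
  have hNA : nablaStarOmega f A x = -∑ i, D (e i) (e i) + A x (gradient f x) := rfl
  have hNB : nablaStarOmega f (fun y => (A y).comp (A y)) x
      = -∑ i, (A x (D (e i) (e i)) + D (e i) (A x (e i)))
        + A x (A x (gradient f x)) := by
    have hB' : ∀ i : Fin n, fderiv ℝ (fun y => (A y).comp (A y)) x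
        (EuclideanSpace.basisFun (Fin n) ℝ i) (EuclideanSpace.basisFun (Fin n) ℝ i)
        = A x (D (EuclideanSpace.basisFun (Fin n) ℝ i) (EuclideanSpace.basisFun (Fin n) ℝ i))
          + D (EuclideanSpace.basisFun (Fin n) ℝ i)
              (A x (EuclideanSpace.basisFun (Fin n) ℝ i)) := by
      intro i; rw [hBf]; rfl
    simp only [nablaStarOmega, nablaStarE, hB', he, ContinuousLinearMap.comp_apply]
  rw [hNA, hNB, hnorm']
  simp only [map_add, map_neg, map_sum, inner_add_left, inner_neg_left, inner_sum,
    sum_inner, Finset.sum_add_distrib, Finset.mul_sum]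
  have hlast : ∀ i, ⟪D ξ (A x (e i)), e i⟫ = ⟪A x (e i), D ξ (e i)⟫ := fun i =>
    hDsym (A x (e i)) (e i)
  rw [Finset.sum_congr rfl (fun i _ => hlast i)]
  simp only [he]
  have h12 : ∀ a : ℝ, 1 / 2 * (2 * a) = a := fun a => by ring
  simp only [h12, ← Finset.mul_sum]
  ring
end
end

section
/- Let V be a real vector space with complex structure J (J²=−I), and let μ be a J-anti-linear endomorphism-valued object with θ := (1/2)(μ − iJμ) its associated T^{1,0}-valued form. Then for any bilinear TX-valued expressions, the real Maurer–Cartan form ∂̄_{T_X,J} μ + μ ⌟ ∇^{1,0}_{g,J} μ = 0 is equivalent to the complex Maurer–Cartan equation ∂̄_{T^{1,0}} θ + θ ⌟ ∂^ω_{T^{1,0}} θ = 0; in particular, 8(θ⌟∂^{ω}θ)(u,v) + 8 conj((θ⌟∂^{ω}θ)(u,v)) = 8(μ⌟∇^{1,0}_{g,J}μ)(u,v) for all tangent vectors u,v. -/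
/-!
Model: a flat Kähler chart, i.e. Euclidean `E = ℝⁿ` with a constant complex
structure `J` (`J² = -1`) and covariant derivative `fderiv`.  Complexified tangent
vectors are pairs `w = (w₁, w₂)` representing `w₁ + i w₂`; multiplication by `i` is
`cI (a, b) = (-b, a)` and conjugation is `(a, b) ↦ (a, -b)`.  For a `J`-anti-linear
endomorphism field `μ`, `θ := (1/2)(μ - i J μ)` is the associated
`T^{1,0}`-valued (0,1)-form; `∂` and `∂̄` are the (1,0)/(0,1)-parts of the
derivative in the direction argument, `∂θ` being extended complex-linearly there.
-/

open scoped RealInnerProductSpace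
noncomputable section

/-- The real Maurer–Cartan equation `∂̄μ + μ⌟∇^{1,0}μ = 0` is
equivalent to the complex one `∂̄θ + θ⌟∂θ = 0`; in particular
`8(θ⌟∂θ)(u,v) + 8 conj((θ⌟∂θ)(u,v)) = 8(μ⌟∇^{1,0}μ)(u,v)` for all `u, v`. -/
theorem stmt14 {n : ℕ}
    (J : EuclideanSpace ℝ (Fin n) →L[ℝ] EuclideanSpace ℝ (Fin n))
    (hJ : ∀ ξ, J (J ξ) = -ξ)
    (μ : EuclideanSpace ℝ (Fin n) →
      (EuclideanSpace ℝ (Fin n) →L[ℝ] EuclideanSpace ℝ (Fin n)))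
    (hμ : ContDiff ℝ (⊤ : ℕ∞) μ)
    (hanti : ∀ x ξ, μ x (J ξ) = -J (μ x ξ)) :
    let E := EuclideanSpace ℝ (Fin n)
    let cI : E × E → E × E := fun w => (-w.2, w.1)
    let conj : E × E → E × E := fun w => (w.1, -w.2)
    let θ : E → E → E × E := fun x ξ =>
      ((1 / 2 : ℝ) • μ x ξ, -((1 / 2 : ℝ) • J (μ x ξ)))
    let Dθ : E → E → E → E × E := fun x ξ η =>
      (fderiv ℝ (fun y => (1 / 2 : ℝ) • μ y η) x ξ,
       fderiv ℝ (fun y => -((1 / 2 : ℝ) • J (μ y η))) x ξ)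
    let Dμ : E → E → E → E := fun x ξ η => fderiv ℝ (fun y => μ y η) x ξ
    -- (1,0)- and (0,1)-parts in the direction argument
    let P : E → E → E → E × E := fun x ξ η =>
      (1 / 2 : ℝ) • (Dθ x ξ η - cI (Dθ x (J ξ) η))
    let Q : E → E → E → E × E := fun x ξ η =>
      (1 / 2 : ℝ) • (Dθ x ξ η + cI (Dθ x (J ξ) η))
    let N10 : E → E → E → E := fun x ξ η =>
      (1 / 2 : ℝ) • (Dμ x ξ η - J (Dμ x (J ξ) η))
    let N01 : E → E → E → E := fun x ξ η =>
      (1 / 2 : ℝ) • (Dμ x ξ η + J (Dμ x (J ξ) η))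
    -- complex-linear extension of `∂θ` in its direction argument
    let Pc : E → E × E → E → E × E := fun x w η => P x w.1 η + cI (P x w.2 η)
    -- quadratic Maurer–Cartan terms
    let MCθ : E → E → E → E × E := fun x u v => Pc x (θ x u) v - Pc x (θ x v) u
    let MCμ : E → E → E → E := fun x u v => N10 x (μ x u) v - N10 x (μ x v) u
    -- ∂̄-terms
    let dbθ : E → E → E → E × E := fun x u v => Q x u v - Q x v u
    let dbμ : E → E → E → E := fun x u v => N01 x u v - N01 x v u
    (∀ x u v, (8 : ℝ) • MCθ x u v + (8 : ℝ) • conj (MCθ x u v)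
        = ((8 : ℝ) • MCμ x u v, 0)) ∧
    ((∀ x u v, dbθ x u v + MCθ x u v = 0) ↔ (∀ x u v, dbμ x u v + MCμ x u v = 0)) := by
  intro E cI conj θ Dθ Dμ P Q N10 N01 Pc MCθ MCμ dbθ dbμ
  have hd : ∀ (η : E), Differentiable ℝ (fun y => μ y η) := fun η =>
    (ContinuousLinearMap.apply ℝ E η).differentiable.comp (hμ.differentiable (by simp))
  have hA : ∀ x ξ η, fderiv ℝ (fun y => (1 / 2 : ℝ) • μ y η) x ξ
      = (1 / 2 : ℝ) • Dμ x ξ η := by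
    intro x ξ η
    simp only [Dμ]
    rw [fderiv_fun_const_smul ((hd η) x)]
    simp
  have hB : ∀ x ξ η, fderiv ℝ (fun y => -((1 / 2 : ℝ) • J (μ y η))) x ξ
      = -((1 / 2 : ℝ) • J (Dμ x ξ η)) := by
    intro x ξ η
    have h1 : HasFDerivAt (fun y => μ y η) (fderiv ℝ (fun y => μ y η) x) x :=
      ((hd η) x).hasFDerivAt
    have h2 : HasFDerivAt (fun y => -((1 / 2 : ℝ) • J (μ y η)))
        (-((1 / 2 : ℝ) • J.comp (fderiv ℝ (fun y => μ y η) x))) x :=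
      ((J.hasFDerivAt.comp x h1).const_smul (1 / 2 : ℝ)).neg
    rw [h2.fderiv]
    simp [Dμ]
  have hDθ : ∀ x ξ η, Dθ x ξ η
      = ((1 / 2 : ℝ) • Dμ x ξ η, -((1 / 2 : ℝ) • J (Dμ x ξ η))) := by
    intro x ξ η
    simp only [Dθ]
    rw [hA, hB]
  have hDμneg : ∀ x ξ η, Dμ x (-ξ) η = -Dμ x ξ η := by
    intro x ξ η; simp only [Dμ, map_neg]
  have hDμsmul : ∀ (c : ℝ) x ξ η, Dμ x (c • ξ) η = c • Dμ x ξ η := by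
    intro c x ξ η; simp only [Dμ, map_smul]
  have hP : ∀ x ξ η, P x ξ η
      = ((1 / 2 : ℝ) • N10 x ξ η, -((1 / 2 : ℝ) • J (N10 x ξ η))) := by
    intro x ξ η
    simp only [P, N10, cI, hDθ, Prod.smul_mk, Prod.mk_sub_mk, Prod.mk.injEq]
    refine ⟨?_, ?_⟩ <;> · (try simp only [map_smul, map_sub, map_add, map_neg, hJ]); module
  have hQ : ∀ x ξ η, Q x ξ η
      = ((1 / 2 : ℝ) • N01 x ξ η, -((1 / 2 : ℝ) • J (N01 x ξ η))) := by
    intro x ξ η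
    simp only [Q, N01, cI, hDθ, Prod.smul_mk, Prod.mk_add_mk, Prod.mk.injEq]
    refine ⟨?_, ?_⟩ <;> · (try simp only [map_smul, map_sub, map_add, map_neg, hJ]); module
  have hN10J : ∀ x ξ η, N10 x (J ξ) η = J (N10 x ξ η) := by
    intro x ξ η
    simp only [N10, hDμneg, hJ]
    simp only [map_smul, map_sub, map_add, map_neg, hJ]
    module
  have hN10smul : ∀ (c : ℝ) x ξ η, N10 x (c • ξ) η = c • N10 x ξ η := by
    intro c x ξ η
    simp only [N10, map_smul J, hDμsmul]
    module
  have hN10neg : ∀ x ξ η, N10 x (-ξ) η = -N10 x ξ η := by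
    intro x ξ η
    simp only [N10, hDμneg, map_neg J]
    module
  have hPc : ∀ x u v, Pc x (θ x u) v
      = ((1 / 2 : ℝ) • N10 x (μ x u) v, -((1 / 2 : ℝ) • J (N10 x (μ x u) v))) := by
    intro x u v
    simp only [Pc, θ, cI, hP, hN10smul, hN10neg, hN10J, Prod.mk_add_mk,
      Prod.mk.injEq]
    refine ⟨?_, ?_⟩ <;> · (try simp only [map_smul, map_sub, map_add, map_neg, hJ]); module
  have hMCθ : ∀ x u v, MCθ x u v
      = ((1 / 2 : ℝ) • MCμ x u v, -((1 / 2 : ℝ) • J (MCμ x u v))) := by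
    intro x u v
    simp only [MCθ, MCμ, hPc, Prod.mk_sub_mk, Prod.mk.injEq]
    refine ⟨?_, ?_⟩ <;> · (try simp only [map_smul, map_sub, map_add, map_neg, hJ]); module
  have hdbθ : ∀ x u v, dbθ x u v
      = ((1 / 2 : ℝ) • dbμ x u v, -((1 / 2 : ℝ) • J (dbμ x u v))) := by
    intro x u v
    simp only [dbθ, dbμ, hQ, Prod.mk_sub_mk, Prod.mk.injEq]
    refine ⟨?_, ?_⟩ <;> · (try simp only [map_smul, map_sub, map_add, map_neg, hJ]); module
  constructor
  · intro x u v
    rw [hMCθ]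
    simp only [conj, Prod.smul_mk, Prod.mk_add_mk, Prod.mk.injEq]
    refine ⟨?_, ?_⟩
    · module
    · module
  · constructor
    · intro h x u v
      have h1 := h x u v
      rw [hMCθ, hdbθ] at h1
      simp only [Prod.mk_add_mk, Prod.mk_eq_zero] at h1
      have h3 : (1 / 2 : ℝ) • (dbμ x u v + MCμ x u v) = 0 := by
        rw [smul_add]; exact h1.1
      rcases smul_eq_zero.mp h3 with h | h
      · norm_num at h
      · exact h
    · intro h x u v
      rw [hMCθ, hdbθ]
      have h1 := h x u v
      simp only [Prod.mk_add_mk, Prod.mk_eq_zero]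
      refine ⟨?_, ?_⟩
      · rw [← smul_add, h1, smul_zero]
      · rw [← neg_add, ← smul_add, ← map_add J, h1]
        simp
end
end

section
/- Let (X,J,g,ω) be a compact Kähler–Ricci soliton with f := log(dV_g/Ω), and A ∈ H^{0,1}_{g,Ω}(T_{X,J}) an Ω-harmonic TX-valued (0,1)-form (i.e. Δ^{Ω,−J}_{T_X,g}A = 0). Then the weighted Lichnerowicz operator satisfies the pointwise stability identity ⟨L^Ω_g A, A⟩_g = −2⟨∇²_g f, A²⟩_g + ⟨J∇_g f ⌟ ∇_g A, JA⟩_g. -/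
/-!
Model: a chart of the Kähler–Ricci soliton `(X, J, g, ω)`: Euclidean `E = ℝⁿ`
with standard metric `g`, constant orthogonal complex structure `J`
(`J² = -1`), covariant derivative `fderiv`; `f := log (dV_g/Ω)`,
`H := ∇_g d f` (the Hessian endomorphism `(∇²_g f)^*_g`).  The soliton equation
`g = Ric_g(Ω) = Ric(g) + ∇_g d f` says `Ric^*(g) = I - H` (hypothesis
`hsoliton`).  `L` is the field `L^Ω_g A` and `D` the field `Δ^{Ω,-J}_{T_X,g} A`,
related through the weighted Bochner formula
`L^Ω_g A = 2 Δ^{Ω,-J}_{T_X,g} A + [Ric^*(g), A] - 2 A ∂^g_{T_X,J}∇_g f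
- (J∇_g f) ⌟ J∇_g A` (hypothesis `hBochner`), where
`∂^g_{T_X,J}∇_g f = (1/2)(H - J H J)` is the `(1,0)`-part of the Hessian and
`(J∇_g f) ⌟ J∇_g A = J ∘ ∇_{J∇_g f} A`.  Harmonicity of `A` is `D = 0`.
-/

open scoped RealInnerProductSpace
noncomputable section

def innerEnd {n : ℕ}
    (S T : EuclideanSpace ℝ (Fin n) →L[ℝ] EuclideanSpace ℝ (Fin n)) : ℝ :=
  ∑ i, ⟪S (EuclideanSpace.basisFun (Fin n) ℝ i), T (EuclideanSpace.basisFun (Fin n) ℝ i)⟫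

namespace Stmt17Aux
open Matrix
variable {n : ℕ}

abbrev E (n : ℕ) := EuclideanSpace ℝ (Fin n)

def e (n : ℕ) (i : Fin n) : E n := EuclideanSpace.basisFun (Fin n) ℝ i

def matOf (S : E n →L[ℝ] E n) : Matrix (Fin n) (Fin n) ℝ :=
  Matrix.of fun i j => S (e n j) i

lemma repr (x : E n) : x = ∑ j, x j • e n j := by
  ext i
  rw [WithLp.ofLp_sum, Finset.sum_apply]
  simp [e, EuclideanSpace.basisFun_apply, EuclideanSpace.single_apply]

lemma apply_eq (S : E n →L[ℝ] E n) (x : E n) (i : Fin n) :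
    S x i = ∑ j, matOf S i j * x j := by
  conv_lhs => rw [repr x]
  rw [map_sum]
  rw [WithLp.ofLp_sum, Finset.sum_apply]
  simp [matOf, mul_comm]

lemma matOf_comp (S T : E n →L[ℝ] E n) :
    matOf (S ∘L T) = matOf S * matOf T := by
  ext i j
  simp [Matrix.mul_apply, matOf, apply_eq S (T (e n j)) i]

lemma inner_eq (x y : E n) : ⟪x, y⟫ = ∑ i, x i * y i := by
  simp [PiLp.inner_apply]
  exact Finset.sum_congr rfl fun _ _ => mul_comm _ _

lemma matOf_entry (S : E n →L[ℝ] E n) (i j : Fin n) :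
    matOf S i j = ⟪S (e n j), e n i⟫ := by
  simp [matOf, e, EuclideanSpace.basisFun_apply, EuclideanSpace.inner_single_right]

lemma innerEnd_eq (S T : E n →L[ℝ] E n) :
    innerEnd S T = Matrix.trace ((matOf S)ᵀ * matOf T) := by
  unfold innerEnd Matrix.trace
  simp only [Matrix.diag_apply, Matrix.mul_apply, Matrix.transpose_apply]
  refine Finset.sum_congr rfl fun i _ => ?_
  rw [inner_eq]
  exact Finset.sum_congr rfl fun j _ => by simp [matOf, e]

lemma matOf_add (S T : E n →L[ℝ] E n) : matOf (S + T) = matOf S + matOf T := by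
  ext i j; simp [matOf]

lemma matOf_sub (S T : E n →L[ℝ] E n) : matOf (S - T) = matOf S - matOf T := by
  ext i j; simp [matOf]

lemma matOf_smul (c : ℝ) (S : E n →L[ℝ] E n) : matOf (c • S) = c • matOf S := by
  ext i j; simp [matOf]

lemma matOf_id : matOf (ContinuousLinearMap.id ℝ (E n)) = 1 := by
  ext i j
  simp [matOf, e, EuclideanSpace.basisFun_apply, EuclideanSpace.single_apply,
    Matrix.one_apply, eq_comm]


lemma matOf_neg (S : E n →L[ℝ] E n) : matOf (-S) = -(matOf S) := by
  ext i j; simp [matOf]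

lemma matOf_zero : matOf (0 : E n →L[ℝ] E n) = 0 := by
  ext i j; simp [matOf]

lemma matrix_calc (Hm Jm Bm Nm : Matrix (Fin n) (Fin n) ℝ)
    (hJt : Jmᵀ = -Jm) (hBt : Bmᵀ = Bm) (hJJ : Jm * Jm = -1)
    (hcomm : Bm * Jm = -(Jm * Bm)) :
    ((-(Hm * Bm) + Bm * (Jm * (Hm * Jm)) - Jm * Nm)ᵀ * Bm).trace
      = -2 * (Hmᵀ * (Bm * Bm)).trace + (Nmᵀ * (Jm * Bm)).trace := by
  have hcomm' : Jm * Bm = -(Bm * Jm) := by rw [hcomm, neg_neg]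
  have hJP : Jm * (Bm * Bm) = Bm * Bm * Jm := by
    calc Jm * (Bm * Bm) = Jm * Bm * Bm := by rw [Matrix.mul_assoc]
      _ = -(Bm * Jm) * Bm := by rw [hcomm']
      _ = -(Bm * (Jm * Bm)) := by rw [Matrix.neg_mul, Matrix.mul_assoc]
      _ = -(Bm * -(Bm * Jm)) := by rw [hcomm']
      _ = Bm * (Bm * Jm) := by rw [Matrix.mul_neg, neg_neg]
      _ = Bm * Bm * Jm := by rw [Matrix.mul_assoc]
  have e1 : (Bm * (Hmᵀ * Bm)).trace = (Hmᵀ * (Bm * Bm)).trace := by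
    rw [Matrix.trace_mul_comm, Matrix.mul_assoc]
  have e2 : (Jm * (Hmᵀ * (Jm * (Bm * Bm)))).trace = -((Hmᵀ * (Bm * Bm)).trace) := by
    rw [hJP, Matrix.trace_mul_comm]
    have hstep : Hmᵀ * (Bm * Bm * Jm) * Jm = Hmᵀ * (Bm * Bm) * (Jm * Jm) := by
      simp [Matrix.mul_assoc]
    rw [hstep, hJJ, Matrix.mul_neg, Matrix.mul_one, Matrix.trace_neg]
  simp only [Matrix.transpose_sub, Matrix.transpose_add, Matrix.transpose_neg,
    Matrix.transpose_mul, hJt, hBt, Matrix.sub_mul, Matrix.add_mul, Matrix.neg_mul,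
    Matrix.mul_neg, neg_neg, Matrix.trace_add, Matrix.trace_sub, Matrix.trace_neg,
    Matrix.mul_assoc]
  rw [e1, e2]
  ring

end Stmt17Aux

/-- On a compact Kähler–Ricci soliton, for `A` harmonic the
weighted Lichnerowicz operator satisfies
`⟨L^Ω_g A, A⟩_g = -2⟨∇²_g f, A²⟩_g + ⟨J∇_g f ⌟ ∇_g A, J A⟩_g`. -/
theorem stmt17 {n : ℕ}
    (J : EuclideanSpace ℝ (Fin n) →L[ℝ] EuclideanSpace ℝ (Fin n))
    (hJ2 : ∀ ξ, J (J ξ) = -ξ) (hJorth : ∀ ξ η, ⟪J ξ, J η⟫ = ⟪ξ, η⟫)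
    (f : EuclideanSpace ℝ (Fin n) → ℝ) (hf : ContDiff ℝ (⊤ : ℕ∞) f)
    (A Ric L D : EuclideanSpace ℝ (Fin n) →
      (EuclideanSpace ℝ (Fin n) →L[ℝ] EuclideanSpace ℝ (Fin n)))
    (hA : ContDiff ℝ (⊤ : ℕ∞) A)
    (hanti : ∀ x ξ, A x (J ξ) = -J (A x ξ))
    (hsymA : ∀ x ξ η, ⟪A x ξ, η⟫ = ⟪ξ, A x η⟫)
    -- soliton equation: Ric^*(g) = I - (∇²_g f)^*_g
    (hsoliton : ∀ x, Ric x = ContinuousLinearMap.id ℝ (EuclideanSpace ℝ (Fin n))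
      - fderiv ℝ (fun y => gradient f y) x)
    -- weighted Bochner formula for the Lichnerowicz operator
    (hBochner : ∀ x, L x
      = (2 : ℝ) • D x + (Ric x ∘L A x - A x ∘L Ric x)
        - (2 : ℝ) • (A x ∘L ((1 / 2 : ℝ) •
            (fderiv ℝ (fun y => gradient f y) x
              - J ∘L fderiv ℝ (fun y => gradient f y) x ∘L J)))
        - J ∘L (fderiv ℝ A x (J (gradient f x))))
    -- harmonicity: A ∈ H^{0,1}_{g,Ω}(T_{X,J})
    (hharm : ∀ x, D x = 0) :
    ∀ x, innerEnd (L x) (A x)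
      = -2 * innerEnd (fderiv ℝ (fun y => gradient f y) x) (A x ∘L A x)
        + innerEnd (fderiv ℝ A x (J (gradient f x))) (J ∘L A x) := by
  intro x
  open Stmt17Aux Matrix in
  set Hc := fderiv ℝ (fun y => gradient f y) x with hHc
  set Nv := fderiv ℝ A x (J (gradient f x)) with hNv
  set B := A x with hB
  have hJskew : ∀ ξ η : EuclideanSpace ℝ (Fin n), ⟪J ξ, η⟫ = -⟪J η, ξ⟫ := by
    intro ξ η
    have h := (hJorth (J ξ) η).symm
    rw [hJ2, inner_neg_left] at h
    rw [h, real_inner_comm]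
  have hJt : (matOf J)ᵀ = -(matOf J) := by
    ext i j
    simp only [Matrix.transpose_apply, Matrix.neg_apply, matOf_entry]
    exact hJskew _ _
  have hBt : (matOf B)ᵀ = matOf B := by
    ext i j
    simp only [Matrix.transpose_apply, matOf_entry]
    rw [hB, hsymA, real_inner_comm]
  have hJJ : matOf J * matOf J = -1 := by
    have h : J ∘L J = -(ContinuousLinearMap.id ℝ (EuclideanSpace ℝ (Fin n))) := by
      ext ξ; simp [hJ2]
    rw [← matOf_comp, h, matOf_neg, matOf_id]
  have hcomm : matOf B * matOf J = -(matOf J * matOf B) := by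
    have h : B ∘L J = -(J ∘L B) := by
      ext ξ; simp [hB, hanti]
    rw [← matOf_comp, ← matOf_comp, ← matOf_neg, h]
  have hL : matOf (L x)
      = -(matOf Hc * matOf B) + matOf B * (matOf J * (matOf Hc * matOf J))
        - matOf J * matOf Nv := by
    rw [hBochner x, hharm x, hsoliton x]
    simp only [smul_zero, zero_add, matOf_sub, matOf_add, matOf_smul, matOf_comp,
      matOf_id, matOf_zero]
    rw [Matrix.mul_smul, smul_smul]
    norm_num
    noncomm_ring
  rw [innerEnd_eq, innerEnd_eq, innerEnd_eq, matOf_comp, matOf_comp, hL]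
  exact matrix_calc (matOf Hc) (matOf J) (matOf B) (matOf Nv) hJt hBt hJJ hcomm
end
end
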